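/- Under the same setup (p odd, rank_p W = n−1, z₀ and λ₀ as in the key lemma), there exists an integer vector z₁ with eᵀ z₁ ≢ 0 (mod p) and (A − λ₀ I) z₁ ≡ p^c z₀ (mod p^τ) for some c ∈ {0, 1, …, τ}. -/

import Mathlib

/-!
Suppose every `y` with `(A - λ₀ I) y ≡ p^c z₀ (mod p^τ)` for some `c ≤ τ` had `eᵀ y ≡ 0 (mod p)`.
Modulo `p`, the span of `y` and `z₀` is then `A`-invariant and orthogonal to `e`, so it lies in
`ker Wᵀ`, which is the line through `z₀` because `rank_p W = n - 1`; hence `y ≡ t z₀ (mod p)`.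
This lets a solution for `p^(c+1)` descend to one for `p^c`: writing `y = t z₀ + p u` gives
`(A - λ₀ I) u ≡ p^c z₀ (mod p^(τ-1))`, and `u` is corrected modulo `p^τ` by duality over `ℤ/p^τ`
(the image of the symmetric matrix `A - λ₀ I` is the orthogonal of its kernel), the obstruction
vanishing because `z₀ᵀ z₀ ≡ 0 (mod p^τ)`. Descending from `y = 0` at `c = τ` to `c = 0` gives
`z₀ ≡ (A - λ₀ I) y ≡ t (A - λ₀ I) z₀ ≡ 0 (mod p)`, a contradiction.
-/

open Matrix

/-- The walk matrix `[e, Ae, …, A^{n-1}e]` of a square matrix `A`. -/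
noncomputable def walkMatrix {n : ℕ} {R : Type*} [CommRing R]
    (A : Matrix (Fin n) (Fin n) R) : Matrix (Fin n) (Fin n) R :=
  Matrix.of fun i j => ((A ^ (j : ℕ)) *ᵥ (fun _ => 1)) i

section CommRing

variable {R : Type*} [CommRing R] {n : ℕ}

lemma transpose_walkMatrix_mulVec {A : Matrix (Fin n) (Fin n) R} (hA : Aᵀ = A)
    (u : Fin n → R) (j : Fin n) :
    ((walkMatrix A)ᵀ *ᵥ u) j = ∑ i, (A ^ (j : ℕ) *ᵥ u) i := by
  have hAj : (A ^ (j : ℕ))ᵀ = A ^ (j : ℕ) := by rw [transpose_pow, hA]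
  calc ((walkMatrix A)ᵀ *ᵥ u) j = (A ^ (j : ℕ) *ᵥ fun _ => 1) ⬝ᵥ u := rfl
    _ = (fun _ => 1) ⬝ᵥ (A ^ (j : ℕ) *ᵥ u) := by
      rw [dotProduct_mulVec, ← mulVec_transpose, hAj]
    _ = ∑ i, (A ^ (j : ℕ) *ᵥ u) i := by simp [dotProduct]

lemma transpose_walkMatrix_mulVec_eq_zero {A : Matrix (Fin n) (Fin n) R} (hA : Aᵀ = A)
    {U : Submodule R (Fin n → R)} (hAU : ∀ u ∈ U, A *ᵥ u ∈ U) (hU : ∀ u ∈ U, ∑ i, u i = 0)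
    {u : Fin n → R} (hu : u ∈ U) : (walkMatrix A)ᵀ *ᵥ u = 0 := by
  have hpow : ∀ k : ℕ, A ^ k *ᵥ u ∈ U := by
    intro k
    induction k with
    | zero => simpa using hu
    | succ k ih => rw [pow_succ', ← mulVec_mulVec]; exact hAU _ ih
  funext j
  rw [transpose_walkMatrix_mulVec hA]
  exact hU _ (hpow j)

lemma walkMatrix_map {S : Type*} [CommRing S] (f : R →+* S) (A : Matrix (Fin n) (Fin n) R) :
    walkMatrix (A.map f) = (walkMatrix A).map f := by
  ext i j
  simp [walkMatrix, RingHom.map_mulVec, ← Matrix.map_pow, Function.comp_def]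

end CommRing

lemma Matrix.exists_eq_smul_of_transpose_mulVec_eq_zero {K m : Type*} [Field K] [Fintype m]
    {M : Matrix m m K} (hM : M.rank = Fintype.card m - 1) {z y : m → K} (hz0 : z ≠ 0)
    (hz : Mᵀ *ᵥ z = 0) (hy : Mᵀ *ᵥ y = 0) : ∃ t : K, y = t • z := by
  have hker : Module.finrank K (LinearMap.ker Mᵀ.mulVecLin) = 1 := by
    have := LinearMap.finrank_range_add_finrank_ker Mᵀ.mulVecLin
    have hcard : 0 < Fintype.card m := Fintype.card_pos_iff.mpr ⟨(Function.ne_iff.mp hz0).choose⟩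
    rw [Module.finrank_fintype_fun_eq_card, ← Matrix.rank, rank_transpose, hM] at this
    omega
  have hspan := eq_span_singleton_of_mem_of_finrank_eq_one hker (LinearMap.mem_ker.mpr hz) hz0
  obtain ⟨t, ht⟩ := Submodule.mem_span_singleton.mp (hspan ▸ LinearMap.mem_ker.mpr hy)
  exact ⟨t, ht.symm⟩

theorem exists_eq_smul_of_walkMatrix_rank {K : Type*} [Field K] {n : ℕ}
    {A : Matrix (Fin n) (Fin n) K} (hA : Aᵀ = A) (hrank : (walkMatrix A).rank = n - 1)
    {μ a : K} {y z : Fin n → K} (hz0 : z ≠ 0) (hz : A *ᵥ z = μ • z) (hy : A *ᵥ y = μ • y + a • z)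
    (hze : ∑ i, z i = 0) (hye : ∑ i, y i = 0) : a = 0 ∧ ∃ t : K, y = t • z := by
  set U := Submodule.span K {y, z}
  have hyU : y ∈ U := Submodule.subset_span (by simp)
  have hzU : z ∈ U := Submodule.subset_span (by simp)
  have hAU : ∀ u ∈ U, A *ᵥ u ∈ U := by
    intro u hu
    induction hu using Submodule.span_induction with
    | mem x hx =>
      rcases hx with rfl | rfl
      · rw [hy]; exact add_mem (U.smul_mem _ hyU) (U.smul_mem _ hzU)
      · rw [hz]; exact U.smul_mem _ hzU
    | zero => simp
    | add x x' _ _ hx hx' => rw [mulVec_add]; exact add_mem hx hx'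
    | smul c x _ hx => rw [mulVec_smul]; exact U.smul_mem c hx
  have hU : ∀ u ∈ U, ∑ i, u i = 0 := by
    intro u hu
    induction hu using Submodule.span_induction with
    | mem x hx => rcases hx with rfl | rfl <;> assumption
    | zero => simp
    | add x x' _ _ hx hx' => simp [Finset.sum_add_distrib, hx, hx']
    | smul c x _ hx => simp [← Finset.mul_sum, hx]
  have hW : ∀ u ∈ U, (walkMatrix A)ᵀ *ᵥ u = 0 := fun u hu =>
    transpose_walkMatrix_mulVec_eq_zero hA hAU hU hu
  obtain ⟨t, rfl⟩ := Matrix.exists_eq_smul_of_transpose_mulVec_eq_zero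
    (by rwa [Fintype.card_fin]) hz0 (hW z hzU) (hW _ hyU)
  refine ⟨?_, t, rfl⟩
  rw [mulVec_smul, hz, smul_comm, left_eq_add, smul_eq_zero] at hy
  exact hy.resolve_right hz0

lemma intCast_comp_eq_zero_iff {ι : Type*} {p : ℕ} {v : ι → ℤ} :
    (Int.cast ∘ v : ι → ZMod p) = 0 ↔ ∀ i, (p : ℤ) ∣ v i := by
  simp [funext_iff, ZMod.intCast_zmod_eq_zero_iff_dvd]

lemma intCast_comp_sub_smul_one_mulVec {n p : ℕ} (A : Matrix (Fin n) (Fin n) ℤ) (lam : ℤ)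
    (y : Fin n → ℤ) :
    (Int.cast ∘ ((A - lam • (1 : Matrix (Fin n) (Fin n) ℤ)) *ᵥ y) : Fin n → ZMod p) =
      A.map Int.cast *ᵥ (Int.cast ∘ y) - (lam : ZMod p) • (Int.cast ∘ y) := by
  ext i
  simpa [sub_mulVec] using RingHom.map_mulVec (Int.castRingHom (ZMod p)) A y i

theorem exists_dvd_sub_smul_of_walkMatrix_rank {n p : ℕ} [Fact p.Prime]
    {A : Matrix (Fin n) (Fin n) ℤ} (hA : Aᵀ = A)
    (hrank : ((walkMatrix A).map (Int.cast : ℤ → ZMod p)).rank = n - 1) {lam a : ℤ}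
    {y z : Fin n → ℤ} (hz0 : ¬ ∀ i, (p : ℤ) ∣ z i)
    (hz : ∀ i, (p : ℤ) ∣ ((A - lam • (1 : Matrix (Fin n) (Fin n) ℤ)) *ᵥ z) i)
    (hy : ∀ i, (p : ℤ) ∣ ((A - lam • (1 : Matrix (Fin n) (Fin n) ℤ)) *ᵥ y - a • z) i)
    (hze : (p : ℤ) ∣ ∑ i, z i) (hye : (p : ℤ) ∣ ∑ i, y i) :
    (p : ℤ) ∣ a ∧ ∃ t : ℤ, ∀ i, (p : ℤ) ∣ (y - t • z) i := by
  have hsum_cast (v : Fin n → ℤ) (hv : (p : ℤ) ∣ ∑ i, v i) : ∑ i, (v i : ZMod p) = 0 := by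
    rwa [← Int.cast_sum, ZMod.intCast_zmod_eq_zero_iff_dvd]
  rw [← intCast_comp_eq_zero_iff, intCast_comp_sub_smul_one_mulVec, sub_eq_zero] at hz
  have hy' : A.map Int.cast *ᵥ (Int.cast ∘ y : Fin n → ZMod p) =
      (lam : ZMod p) • (Int.cast ∘ y) + (a : ZMod p) • (Int.cast ∘ z) := by
    ext i
    have hyi := (ZMod.intCast_zmod_eq_zero_iff_dvd _ p).mpr (hy i)
    have hAy := congrFun (intCast_comp_sub_smul_one_mulVec (p := p) A lam y) i
    simp only [Function.comp_apply, Pi.sub_apply, Pi.smul_apply, Pi.add_apply, smul_eq_mul,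
      Int.cast_sub, Int.cast_mul] at hyi hAy ⊢
    linear_combination hyi - hAy
  have hW : walkMatrix (A.map (Int.cast : ℤ → ZMod p)) = (walkMatrix A).map Int.cast :=
    walkMatrix_map (Int.castRingHom (ZMod p)) A
  obtain ⟨ha, t, ht⟩ := exists_eq_smul_of_walkMatrix_rank (A := A.map Int.cast)
    (by rw [← transpose_map, hA]) (by rwa [hW])
    (mt intCast_comp_eq_zero_iff.mp hz0) hz hy' (hsum_cast z hze) (hsum_cast y hye)
  refine ⟨(ZMod.intCast_zmod_eq_zero_iff_dvd a p).mp ha, ZMod.cast t, fun i => ?_⟩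
  have hti := congrFun ht i
  rw [← ZMod.intCast_zmod_eq_zero_iff_dvd]
  simp only [Pi.sub_apply, Pi.smul_apply, smul_eq_mul, Int.cast_sub, Int.cast_mul,
    ZMod.intCast_zmod_cast, Function.comp_apply] at hti ⊢
  rw [hti, sub_self]

lemma AddCircle.coe_intCast_div_eq_zero_iff {N : ℤ} (hN : N ≠ 0) (a : ℤ) :
    ((a / N : ℚ) : AddCircle (1 : ℚ)) = 0 ↔ N ∣ a := by
  rw [AddCircle.coe_eq_zero_iff]
  constructor
  · rintro ⟨b, hb⟩
    rw [zsmul_one, eq_div_iff (by exact_mod_cast hN)] at hb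
    exact ⟨b, by exact_mod_cast (hb.symm.trans (mul_comm _ _))⟩
  · rintro ⟨b, rfl⟩
    refine ⟨b, ?_⟩
    rw [zsmul_one]
    push_cast
    field_simp

lemma AddCircle.exists_eq_intCast_div_of_zsmul_eq_zero {N : ℤ} (hN : N ≠ 0)
    {θ : AddCircle (1 : ℚ)} (h : N • θ = 0) : ∃ a : ℤ, θ = ((a / N : ℚ) : AddCircle (1 : ℚ)) := by
  obtain ⟨q, rfl⟩ := QuotientAddGroup.mk_surjective θ
  rw [← AddCircle.coe_zsmul, AddCircle.coe_eq_zero_iff] at h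
  obtain ⟨a, ha⟩ := h
  refine ⟨a, ?_⟩
  rw [zsmul_one, zsmul_eq_mul] at ha
  rw [ha]
  congr 1
  field_simp

section Duality

variable {ι : Type*} [Fintype ι] [DecidableEq ι]

lemma AddMonoidHom.exists_eq_coe_dotProduct_div {N : ℤ} (hN : N ≠ 0)
    (ψ : (ι → ℤ) →+ AddCircle (1 : ℚ)) (hψ : ∀ v, ψ (N • v) = 0) :
    ∃ k : ι → ℤ, ∀ v, ψ v = (((k ⬝ᵥ v : ℤ) / N : ℚ) : AddCircle (1 : ℚ)) := by
  choose k hk using fun i => AddCircle.exists_eq_intCast_div_of_zsmul_eq_zero hN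
    (θ := ψ fun j => if i = j then 1 else 0) (by rw [← map_zsmul, hψ])
  refine ⟨k, fun v => ?_⟩
  calc ψ v = ∑ i, v i • ψ (fun j => if i = j then 1 else 0) := by
        conv_lhs => rw [pi_eq_sum_univ v]
        rw [map_sum]
        simp only [map_zsmul]
    _ = ∑ i, (((v i * k i : ℤ) / N : ℚ) : AddCircle (1 : ℚ)) := by
        refine Finset.sum_congr rfl fun i _ => ?_
        rw [hk, ← AddCircle.coe_zsmul, zsmul_eq_mul]
        push_cast
        ring_nf
    _ = (((k ⬝ᵥ v : ℤ) / N : ℚ) : AddCircle (1 : ℚ)) := by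
        have hsum : ((k ⬝ᵥ v : ℤ) / N : ℚ) = ∑ i, ((v i * k i : ℤ) / N : ℚ) := by
          rw [← Finset.sum_div]
          push_cast [dotProduct, mul_comm]
          rfl
        rw [hsum]
        exact (map_sum (QuotientAddGroup.mk' (AddSubgroup.zmultiples (1 : ℚ))) _ _).symm

theorem exists_dotProduct_dvd_of_notMem {N : ℤ} (hN : N ≠ 0) {H : Submodule ℤ (ι → ℤ)}
    (hNH : ∀ v, N • v ∈ H) {x : ι → ℤ} (hx : x ∉ H) :
    ∃ k : ι → ℤ, (∀ v ∈ H, N ∣ k ⬝ᵥ v) ∧ ¬ N ∣ k ⬝ᵥ x := by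
  obtain ⟨c, hc⟩ := CharacterModule.exists_character_apply_ne_zero_of_ne_zero
    ((Submodule.Quotient.mk_eq_zero H).not.mpr hx)
  set ψ : (ι → ℤ) →+ AddCircle (1 : ℚ) := c.comp H.mkQ.toAddMonoidHom
  have hψH : ∀ v ∈ H, ψ v = 0 := fun v hv => by
    show c (H.mkQ v) = 0
    rw [Submodule.mkQ_apply, (Submodule.Quotient.mk_eq_zero H).mpr hv, map_zero]
  obtain ⟨k, hk⟩ := ψ.exists_eq_coe_dotProduct_div hN fun v => hψH _ (hNH v)
  refine ⟨k, fun v hv => ?_, ?_⟩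
  · rw [← AddCircle.coe_intCast_div_eq_zero_iff hN, ← hk]
    exact hψH v hv
  · rw [← AddCircle.coe_intCast_div_eq_zero_iff hN, ← hk]
    exact hc

theorem Matrix.exists_mulVec_sub_dvd {N : ℤ} (hN : N ≠ 0) (B : Matrix ι ι ℤ) (x : ι → ℤ)
    (h : ∀ k : ι → ℤ, (∀ j, N ∣ (Bᵀ *ᵥ k) j) → N ∣ k ⬝ᵥ x) :
    ∃ w : ι → ℤ, ∀ i, N ∣ (B *ᵥ w - x) i := by
  by_contra hx
  set H := LinearMap.range B.mulVecLin ⊔ LinearMap.range (N • LinearMap.id)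
  have hxH : x ∉ H := by
    rintro hx'
    obtain ⟨_, ⟨w, rfl⟩, _, ⟨u, rfl⟩, hwu⟩ := Submodule.mem_sup.mp hx'
    refine hx ⟨w, fun i => ⟨-u i, ?_⟩⟩
    rw [← hwu]
    simp
  obtain ⟨k, hkH, hkx⟩ := exists_dotProduct_dvd_of_notMem hN
    (fun v => Submodule.mem_sup_right (LinearMap.mem_range.mpr ⟨v, rfl⟩)) hxH
  refine hkx (h k fun j => ?_)
  have hkj := hkH _ (Submodule.mem_sup_left (LinearMap.mem_range.mpr ⟨Pi.single j 1, rfl⟩))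
  rwa [mulVecLin_apply, dotProduct_mulVec, dotProduct_single, mul_one, ← mulVec_transpose] at hkj

end Duality

section Descent

variable {ι : Type*}

lemma exists_eq_smul_of_forall_dvd {d : ℤ} {v : ι → ℤ} (h : ∀ i, d ∣ v i) :
    ∃ u : ι → ℤ, v = d • u := by
  choose u hu using h
  exact ⟨u, funext hu⟩

variable [Fintype ι]

lemma dvd_dotProduct_of_forall_dvd {d : ℤ} {v : ι → ℤ} (h : ∀ i, d ∣ v i) (w : ι → ℤ) :
    d ∣ v ⬝ᵥ w :=
  Finset.dvd_sum fun i _ => (h i).mul_right _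

variable [DecidableEq ι] {p : ℤ} {s : ℕ} {B : Matrix ι ι ℤ} {z : ι → ℤ}

theorem exists_mulVec_sub_pow_smul_dvd (hp : p ≠ 0) (hB : Bᵀ = B)
    (hker : ∀ k, (∀ i, p ^ (s + 1) ∣ (B *ᵥ k) i) → ∃ t : ℤ, ∀ i, p ∣ (k - t • z) i)
    {r : ι → ℤ} (hzr : p ∣ z ⬝ᵥ r) :
    ∃ w : ι → ℤ, ∀ i, p ^ (s + 1) ∣ (B *ᵥ w - p ^ s • r) i := by
  refine exists_mulVec_sub_dvd (pow_ne_zero (s + 1) hp) B (p ^ s • r) fun k hk => ?_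
  rw [hB] at hk
  obtain ⟨t, ht⟩ := hker k hk
  obtain ⟨v, hv⟩ := exists_eq_smul_of_forall_dvd ht
  obtain rfl : k = t • z + p • v := by rw [← hv]; abel
  have hkr : (t • z + p • v) ⬝ᵥ (p ^ s • r) = p ^ s * (t * (z ⬝ᵥ r) + p * (v ⬝ᵥ r)) := by
    simp only [dotProduct_smul, add_dotProduct, smul_dotProduct, smul_eq_mul]
  rw [hkr, pow_succ]
  exact mul_dvd_mul_left _ (dvd_add (hzr.mul_left _) (dvd_mul_right _ _))

theorem exists_solution_of_succ (hp : p ≠ 0) (hB : Bᵀ = B)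
    (hBz : ∀ i, p ^ (s + 1) ∣ (B *ᵥ z) i) (hzz : p ^ (s + 1) ∣ z ⬝ᵥ z)
    (hker : ∀ y c, c ≤ s + 1 → (∀ i, p ^ (s + 1) ∣ (B *ᵥ y - p ^ c • z) i) →
      ∃ t : ℤ, ∀ i, p ∣ (y - t • z) i)
    {c : ℕ} (hc : c < s + 1) {y : ι → ℤ}
    (hy : ∀ i, p ^ (s + 1) ∣ (B *ᵥ y - p ^ (c + 1) • z) i) :
    ∃ y' : ι → ℤ, ∀ i, p ^ (s + 1) ∣ (B *ᵥ y' - p ^ c • z) i := by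
  obtain ⟨t, ht⟩ := hker y (c + 1) hc hy
  obtain ⟨u, hu⟩ := exists_eq_smul_of_forall_dvd ht
  obtain rfl : y = t • z + p • u := by rw [← hu]; abel
  have hBu : ∀ i, p ^ s ∣ (B *ᵥ u - p ^ c • z) i := by
    have hpu : p • (B *ᵥ u - p ^ c • z) =
        (B *ᵥ (t • z + p • u) - p ^ (c + 1) • z) - t • (B *ᵥ z) := by
      rw [mulVec_add, mulVec_smul, mulVec_smul]
      module
    intro i
    rw [← mul_dvd_mul_iff_left hp, ← pow_succ', ← smul_eq_mul, ← Pi.smul_apply, hpu]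
    exact dvd_sub (hy i) ((hBz i).mul_left t)
  obtain ⟨r, hr⟩ := exists_eq_smul_of_forall_dvd hBu
  have hzr : p ∣ z ⬝ᵥ r := by
    have hzr' : p ^ s * (z ⬝ᵥ r) = (B *ᵥ z) ⬝ᵥ u - p ^ c * (z ⬝ᵥ z) := by
      rw [← smul_eq_mul, ← dotProduct_smul, ← hr, dotProduct_sub, dotProduct_mulVec,
        ← mulVec_transpose, hB, dotProduct_smul, smul_eq_mul]
    rw [← mul_dvd_mul_iff_left (pow_ne_zero s hp), ← pow_succ, hzr']
    exact dvd_sub (dvd_dotProduct_of_forall_dvd hBz u) (hzz.mul_left _)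
  obtain ⟨w, hw⟩ := exists_mulVec_sub_pow_smul_dvd hp hB (fun k hk => hker k (s + 1) le_rfl
    fun i => by simpa using dvd_sub (hk i) (dvd_mul_right _ (z i))) hzr
  refine ⟨u - w, fun i => ?_⟩
  have huw : B *ᵥ (u - w) - p ^ c • z = -(B *ᵥ w - p ^ s • r) := by
    rw [mulVec_sub, ← hr]
    abel
  rw [huw, Pi.neg_apply, dvd_neg]
  exact hw i

theorem exists_solution_of_le (hp : p ≠ 0) (hB : Bᵀ = B)
    (hBz : ∀ i, p ^ (s + 1) ∣ (B *ᵥ z) i) (hzz : p ^ (s + 1) ∣ z ⬝ᵥ z)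
    (hker : ∀ y c, c ≤ s + 1 → (∀ i, p ^ (s + 1) ∣ (B *ᵥ y - p ^ c • z) i) →
      ∃ t : ℤ, ∀ i, p ∣ (y - t • z) i)
    {c : ℕ} (hc : c ≤ s + 1) :
    ∃ y : ι → ℤ, ∀ i, p ^ (s + 1) ∣ (B *ᵥ y - p ^ c • z) i := by
  refine Nat.decreasingInduction
    (motive := fun c _ => ∃ y : ι → ℤ, ∀ i, p ^ (s + 1) ∣ (B *ᵥ y - p ^ c • z) i)
    (fun c hc ⟨y, hy⟩ => exists_solution_of_succ hp hB hBz hzz hker hc hy)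
    ⟨0, fun i => by simp⟩ hc

end Descent

theorem exists_z1_with_nonzero_row_sum_general
    {n : ℕ} (p : ℕ) (hp : p.Prime) (τ : ℕ) (hτ : 1 ≤ τ)
    (A : Matrix (Fin n) (Fin n) ℤ) (hsymm : Aᵀ = A)
    (W : Matrix (Fin n) (Fin n) ℤ) (hW : W = walkMatrix A)
    (hrank : (W.map (Int.cast : ℤ → ZMod p)).rank = n - 1)
    (lam : ℤ) (z₀ : Fin n → ℤ) (hz₀p : ¬ (∀ i, (p : ℤ) ∣ z₀ i))
    (hAz₀ : ∀ i, (p : ℤ) ^ τ ∣ ((A - lam • (1 : Matrix (Fin n) (Fin n) ℤ)) *ᵥ z₀) i)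
    (hz₀z₀ : (p : ℤ) ^ (2 * τ) ∣ z₀ ⬝ᵥ z₀) :
    ∃ (z₁ : Fin n → ℤ) (c : ℕ), c ≤ τ ∧
      ¬ ((p : ℤ) ∣ ∑ i, z₁ i) ∧
      ∀ i, (p : ℤ) ^ τ ∣
        ((A - lam • (1 : Matrix (Fin n) (Fin n) ℤ)) *ᵥ z₁ - ((p : ℤ) ^ c) • z₀) i := by
  have := Fact.mk hp
  subst hW
  obtain ⟨s, rfl⟩ : ∃ s, τ = s + 1 := ⟨τ - 1, by omega⟩
  set B := A - lam • (1 : Matrix (Fin n) (Fin n) ℤ)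
  by_contra hcon
  have hsum (y : Fin n → ℤ) (c : ℕ) (hc : c ≤ s + 1)
      (hy : ∀ i, (p : ℤ) ^ (s + 1) ∣ (B *ᵥ y - (p : ℤ) ^ c • z₀) i) :
      (p : ℤ) ∣ ∑ i, y i :=
    by_contra fun h => hcon ⟨y, c, hc, h, hy⟩
  have hp_dvd : (p : ℤ) ∣ (p : ℤ) ^ (s + 1) := dvd_pow_self _ s.succ_ne_zero
  have hkey (y : Fin n → ℤ) (c : ℕ) (hc : c ≤ s + 1)
      (hy : ∀ i, (p : ℤ) ^ (s + 1) ∣ (B *ᵥ y - (p : ℤ) ^ c • z₀) i) :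
      (p : ℤ) ∣ (p : ℤ) ^ c ∧ ∃ t : ℤ, ∀ i, (p : ℤ) ∣ (y - t • z₀) i :=
    exists_dvd_sub_smul_of_walkMatrix_rank hsymm hrank hz₀p (fun i => hp_dvd.trans (hAz₀ i))
      (fun i => hp_dvd.trans (hy i))
      (hsum z₀ (s + 1) le_rfl fun i => by simpa using dvd_sub (hAz₀ i) (dvd_mul_right _ (z₀ i)))
      (hsum y c hc hy)
  obtain ⟨y, hy⟩ := exists_solution_of_le (Int.natCast_ne_zero.mpr hp.ne_zero)
    (by rw [transpose_sub, transpose_smul, transpose_one, hsymm]) hAz₀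
    ((pow_dvd_pow _ (by omega)).trans hz₀z₀) (fun y c hc hy => (hkey y c hc hy).2) (Nat.zero_le _)
  exact hp.not_dvd_one (Int.natCast_dvd_natCast.mp (by simpa using (hkey y 0 (Nat.zero_le _) hy).1))

/-- Under the setup of the key lemma, there is an integer vector `z₁` with
`eᵀ z₁ ≢ 0 (mod p)` and `(A - λ₀ I) z₁ ≡ p^c z₀ (mod p^τ)` for some
`c ∈ {0, 1, …, τ}`. -/
theorem exists_z1_with_nonzero_row_sum
    {n : ℕ} (p : ℕ) (hp : p.Prime) (hodd : Odd p) (τ : ℕ) (hτ : 1 ≤ τ)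
    (A : Matrix (Fin n) (Fin n) ℤ) (hsymm : Aᵀ = A)
    (W : Matrix (Fin n) (Fin n) ℤ) (hW : W = walkMatrix A)
    (hrank : (W.map (Int.cast : ℤ → ZMod p)).rank = n - 1)
    (lam : ℤ) (z₀ : Fin n → ℤ) (hz₀p : ¬ (∀ i, (p : ℤ) ∣ z₀ i))
    (hAz₀ : ∀ i, (p : ℤ) ^ τ ∣ ((A - lam • (1 : Matrix (Fin n) (Fin n) ℤ)) *ᵥ z₀) i)
    (hz₀z₀ : (p : ℤ) ^ (2 * τ) ∣ z₀ ⬝ᵥ z₀)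
    (hz₀Az₀ : (p : ℤ) ^ (2 * τ) ∣ z₀ ⬝ᵥ (A *ᵥ z₀))
    (hWz₀ : ∀ i, (p : ℤ) ^ τ ∣ (Wᵀ *ᵥ z₀) i) :
    ∃ (z₁ : Fin n → ℤ) (c : ℕ), c ≤ τ ∧
      ¬ ((p : ℤ) ∣ ∑ i, z₁ i) ∧
      ∀ i, (p : ℤ) ^ τ ∣
        ((A - lam • (1 : Matrix (Fin n) (Fin n) ℤ)) *ᵥ z₁ - ((p : ℤ) ^ c) • z₀) i :=
  exists_z1_with_nonzero_row_sum_general p hp τ hτ A hsymm W hW hrank lam z₀ hz₀p hAz₀ hz₀z₀
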